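/- arXiv:2206.12335 — 3 statements merged into one kernel-verified Lean document; each statement's English description precedes it below -/
import Mathlib

section
/- Let φ = (√5+1)/2 be the golden ratio. Suppose (q_i) and (s_i) are sequences of positive reals with q_{i+1} = q_i² and s_{i+1} = s_i² − q_i for all i ≥ k, and s_k² > q_k φ². Then s_i² > q_i φ² for all i ≥ k. -/
/-- If `q_{i+1} = q_i²`, `s_{i+1} = s_i² − q_i` for `i ≥ k`, with positive terms and
`s_k² > q_k φ²` where `φ` is the golden ratio, then `s_i² > q_i φ²` for all `i ≥ k`. -/
theorem stmt_1 (φ : ℝ) (hφ : φ = (Real.sqrt 5 + 1) / 2) (q s : ℕ → ℝ) (k : ℕ)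
    (hpos : ∀ i ≥ k, 0 < q i ∧ 0 < s i)
    (hq : ∀ i ≥ k, q (i + 1) = (q i) ^ 2)
    (hs : ∀ i ≥ k, s (i + 1) = (s i) ^ 2 - q i)
    (hinit : (s k) ^ 2 > q k * φ ^ 2) :
    ∀ i ≥ k, (s i) ^ 2 > q i * φ ^ 2 := by
  have h5 : Real.sqrt 5 ^ 2 = 5 := Real.sq_sqrt (by norm_num)
  have h5pos : (1:ℝ) < Real.sqrt 5 := by
    nlinarith [Real.sqrt_nonneg 5]
  have hφ2 : φ ^ 2 = φ + 1 := by rw [hφ]; ring_nf; nlinarith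
  have hφ1 : 1 < φ := by rw [hφ]; linarith
  intro i hi
  induction i, hi using Nat.le_induction with
  | base => exact hinit
  | succ n hn ih =>
    obtain ⟨hqn, hsn⟩ := hpos n hn
    rw [hq n hn, hs n hn]
    have key : (s n) ^ 2 - q n > q n * φ := by nlinarith
    have hpos2 : 0 < q n * φ := by positivity
    nlinarith [sq_nonneg (s n ^ 2 - q n - q n * φ)]
end

section
/- Let φ = (√5+1)/2 and let (r_i)_{i≥k} be a sequence in (0,1) satisfying 1/r_{i+1} = (1/r_i − 1)² for all i ≥ k, with 1/r_k > φ². Then r_i → 0 as i → ∞. -/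
open Filter

/-- If `r_i ∈ (0,1)` satisfies `1/r_{i+1} = (1/r_i − 1)²` for `i ≥ k` and
`1/r_k > φ²` where `φ` is the golden ratio, then `r_i → 0`. -/
theorem stmt_3 (φ : ℝ) (hφ : φ = (Real.sqrt 5 + 1) / 2) (r : ℕ → ℝ) (k : ℕ)
    (hmem : ∀ i ≥ k, r i ∈ Set.Ioo (0 : ℝ) 1)
    (hrec : ∀ i ≥ k, 1 / r (i + 1) = (1 / r i - 1) ^ 2)
    (hinit : 1 / r k > φ ^ 2) :
    Tendsto r atTop (nhds 0) := by
  have h5 : Real.sqrt 5 ^ 2 = 5 := Real.sq_sqrt (by norm_num)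
  have h5' : Real.sqrt 5 ≥ 2 := by
    nlinarith [Real.sqrt_nonneg 5]
  have hφ2 : φ ^ 2 = φ + 1 := by rw [hφ]; nlinarith
  have hφ32 : φ ≥ 3 / 2 := by rw [hφ]; linarith
  set c : ℝ := 1 / r k - φ ^ 2 with hc
  have hcpos : c > 0 := by rw [hc]; linarith
  -- key induction
  have key : ∀ n : ℕ, 1 / r (k + n) ≥ φ ^ 2 + 3 ^ n * c := by
    intro n
    induction n with
    | zero => simp [hc]
    | succ n ih =>
      have hge : k + n ≥ k := Nat.le_add_right k n
      have hrecn := hrec (k + n) hge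
      have h3 : (3:ℝ) ^ n ≥ 1 := one_le_pow₀ (by norm_num : (1:ℝ) ≤ 3)
      have hs : 1 / r (k + n) ≥ φ ^ 2 + c := by nlinarith
      have : k + (n + 1) = (k + n) + 1 := by ring
      rw [this, hrecn]
      set s := 1 / r (k + n)
      have step : (s - 1) ^ 2 - φ ^ 2 ≥ 3 * (s - φ ^ 2) := by
        nlinarith [sq_nonneg (s - φ ^ 2)]
      have : (3:ℝ) ^ (n+1) * c = 3 * (3 ^ n * c) := by ring
      nlinarith
  -- 1/r tends to atTop
  have htop : Tendsto (fun i => 1 / r i) atTop atTop := by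
    have h1 : Tendsto (fun i : ℕ => φ ^ 2 + 3 ^ (i - k) * c) atTop atTop := by
      apply tendsto_atTop_add_const_left
      apply Tendsto.atTop_mul_const hcpos
      exact (tendsto_pow_atTop_atTop_of_one_lt (by norm_num : (1:ℝ) < 3)).comp
        (tendsto_sub_atTop_nat k)
    apply tendsto_atTop_mono' _ _ h1
    filter_upwards [eventually_ge_atTop k] with i hi
    have := key (i - k)
    rwa [Nat.add_sub_cancel' hi] at this
  have hev : ∀ᶠ i in atTop, (fun i => 1 / r i)⁻¹ i = r i := by
    filter_upwards [eventually_ge_atTop k] with i hi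
    have hpos := (hmem i hi).1
    simp [Pi.inv_apply, one_div, inv_inv]
  have := htop.inv_tendsto_atTop
  exact Tendsto.congr' hev this
end

section
/- The infimum over x ∈ [0,1] of max{1 − (3/4)x, x² + (1/2)(1−x)} equals (35 − 3√33)/32. -/
/-- `inf_{x ∈ [0,1]} max{1 − 3x/4, x² + (1−x)/2} = (35 − 3√33)/32`. -/
theorem stmt_5 :
    sInf ((fun x : ℝ => max (1 - 3 / 4 * x) (x ^ 2 + 1 / 2 * (1 - x))) '' Set.Icc 0 1)
      = (35 - 3 * Real.sqrt 33) / 32 := by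
  set s := Real.sqrt 33 with hsdef
  have hs2 : s ^ 2 = 33 := Real.sq_sqrt (by norm_num)
  have hs5 : (5 : ℝ) ≤ s := by
    nlinarith [Real.sqrt_nonneg (33 : ℝ), hs2]
  have hs6 : s ≤ 6 := by
    nlinarith [Real.sqrt_nonneg (33 : ℝ), hs2]
  set x0 : ℝ := (s - 1) / 8 with hx0
  have hx0mem : x0 ∈ Set.Icc (0 : ℝ) 1 := ⟨by linarith, by linarith⟩
  have hval : max (1 - 3 / 4 * x0) (x0 ^ 2 + 1 / 2 * (1 - x0)) = (35 - 3 * s) / 32 := by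
    have h1 : 1 - 3 / 4 * x0 = (35 - 3 * s) / 32 := by rw [hx0]; ring
    have h2 : x0 ^ 2 + 1 / 2 * (1 - x0) = (35 - 3 * s) / 32 := by
      rw [hx0]; field_simp; nlinarith [hs2]
    rw [h1, h2, max_self]
  apply le_antisymm
  · exact csInf_le ⟨(35 - 3 * s) / 32, fun y hy => by
      obtain ⟨x, hx, rfl⟩ := hy
      simp only
      rcases le_total x x0 with h | h
      · exact le_max_of_le_left (by linarith)
      · refine le_max_of_le_right ?_
        nlinarith [hs2, hx.2]⟩ ⟨x0, hx0mem, hval⟩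
  · refine le_csInf ⟨_, Set.mem_image_of_mem _ hx0mem⟩ ?_
    rintro y ⟨x, hx, rfl⟩
    simp only
    rcases le_total x x0 with h | h
    · exact le_max_of_le_left (by linarith)
    · refine le_max_of_le_right ?_
      nlinarith [hs2, hx.2]
end
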